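/- Let n ≥ 2 and let X : ℝⁿ → ℝⁿ be a C² diffeomorphism whose Jacobian determinant J(x) = det DX(x) is positive everywhere. Let f : ℝⁿ → ℝ be of class C¹ and set f̄ = f ∘ X. Then for every x ∈ ℝⁿ and every i ∈ {1,…,n}, (∂ᵢf)(X(x)) = J(x)⁻¹ Σⱼ ∂ⱼ [ (adj(DX))ⱼᵢ f̄ ] (x); that is, (∇f) ∘ X = J⁻¹ div( adj(DX) f̄ ), where adj(DX) f̄ is the matrix field adj(DX) multiplied by the scalar f̄ and div is the column-wise matrix divergence. -/

import Mathlib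

open scoped BigOperators
open MeasureTheory

/-- Partial derivative `∂ᵢ f` of a scalar function at a point `x`. -/
noncomputable def pd {n : ℕ} (i : Fin n) (f : (Fin n → ℝ) → ℝ) (x : Fin n → ℝ) : ℝ :=
  fderiv ℝ f x (Pi.single i 1)

/-- Gradient of a scalar function. -/
noncomputable def grad {n : ℕ} (f : (Fin n → ℝ) → ℝ) (x : Fin n → ℝ) : Fin n → ℝ :=
  fun i => pd i f x

/-- Laplacian of a scalar function. -/
noncomputable def lap {n : ℕ} (f : (Fin n → ℝ) → ℝ) (x : Fin n → ℝ) : ℝ :=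
  ∑ i, pd i (pd i f) x

/-- Squared euclidean norm of the gradient, `|∇f|² = ∑ᵢ (∂ᵢf)²`. -/
noncomputable def gradNormSq {n : ℕ} (f : (Fin n → ℝ) → ℝ) (x : Fin n → ℝ) : ℝ :=
  ∑ i, (pd i f x) ^ 2

/-- Divergence of a matrix-valued field: `(matDiv M x)ᵢ = ∑ⱼ ∂ⱼ Mⱼᵢ`. -/
noncomputable def matDiv {n : ℕ} (M : (Fin n → ℝ) → Matrix (Fin n) (Fin n) ℝ)
    (x : Fin n → ℝ) : Fin n → ℝ :=
  fun i => ∑ j, pd j (fun y => M y j i) x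

/-- Divergence of a vector field: `vecDiv F x = ∑ᵢ ∂ᵢ Fᵢ`. -/
noncomputable def vecDiv {n : ℕ} (F : (Fin n → ℝ) → (Fin n → ℝ)) (x : Fin n → ℝ) : ℝ :=
  ∑ i, pd i (fun y => F y i) x

/-- Jacobian matrix of a vector field: `(jacM F x)ᵢⱼ = ∂ⱼ Fᵢ`. -/
noncomputable def jacM {n : ℕ} (F : (Fin n → ℝ) → (Fin n → ℝ)) (x : Fin n → ℝ) :
    Matrix (Fin n) (Fin n) ℝ :=
  Matrix.of fun i j => pd j (fun y => F y i) x

/-! Put `f̄ = f ∘ X`. The product rule gives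
`div (f̄ • adj DX) = f̄ • div (adj DX) + ∇f̄ ᵥ* adj DX`, and the chain rule
`∇f̄ = (∇f ∘ X) ᵥ* DX` together with `DX * adj DX = J • 1` turns the second term into
`J • (∇f ∘ X)`. The first term vanishes by the Piola identity `div (adj DX) = 0`: expanding the
adjugate entries as signed sums over permutations, the terms of their derivatives cancel in pairs
under `σ ↦ σ * swap j m`, because the rows of `DX` are gradients and hence have symmetric
derivatives. -/

open Finset
open scoped Matrix

section PartialDerivatives

variable {n : ℕ} {x : Fin n → ℝ}

lemma pd_sum {ι : Type*} {s : Finset ι} {g : ι → (Fin n → ℝ) → ℝ}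
    (hg : ∀ a ∈ s, DifferentiableAt ℝ (g a) x) (j : Fin n) :
    pd j (fun y => ∑ a ∈ s, g a y) x = ∑ a ∈ s, pd j (g a) x := by
  rw [pd, fderiv_fun_sum hg, _root_.sum_apply]
  rfl

lemma pd_const_mul {g : (Fin n → ℝ) → ℝ} (hg : DifferentiableAt ℝ g x) (c : ℝ) (j : Fin n) :
    pd j (fun y => c * g y) x = c * pd j g x := by
  rw [pd, fderiv_const_mul hg c, smul_apply, smul_eq_mul]
  rfl

lemma pd_mul {g h : (Fin n → ℝ) → ℝ} (hg : DifferentiableAt ℝ g x)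
    (hh : DifferentiableAt ℝ h x) (j : Fin n) :
    pd j (fun y => g y * h y) x = pd j g x * h x + g x * pd j h x := by
  simp only [pd, fderiv_fun_mul hg hh, add_apply, smul_apply, smul_eq_mul]
  ring

lemma pd_prod {ι : Type*} [DecidableEq ι] {s : Finset ι} {g : ι → (Fin n → ℝ) → ℝ}
    (hg : ∀ a ∈ s, DifferentiableAt ℝ (g a) x) (j : Fin n) :
    pd j (fun y => ∏ a ∈ s, g a y) x = ∑ a ∈ s, (∏ b ∈ s.erase a, g b x) * pd j (g a) x := by
  simp only [pd, fderiv_finsetProd hg, _root_.sum_apply, smul_apply, smul_eq_mul]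

lemma fderiv_apply_eq_sum_pd (g : (Fin n → ℝ) → ℝ) (v : Fin n → ℝ) :
    fderiv ℝ g x v = ∑ k, v k * pd k g x := by
  conv_lhs => rw [← univ_sum_single v]
  refine (map_sum _ _ _).trans (sum_congr rfl fun k _ => ?_)
  rw [pd, ← smul_eq_mul, ← map_smul, ← Pi.single_smul', smul_eq_mul, mul_one]

lemma pd_apply {F : (Fin n → ℝ) → Fin n → ℝ} (hF : DifferentiableAt ℝ F x) (k j : Fin n) :
    pd j (fun y => F y k) x = fderiv ℝ F x (Pi.single j 1) k := by
  rw [pd, fderiv_apply hF]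
  rfl

lemma ContDiff.pd {m : WithTop ℕ∞} {g : (Fin n → ℝ) → ℝ} (hg : ContDiff ℝ (m + 1) g)
    (j : Fin n) : ContDiff ℝ m (pd j g) :=
  (hg.fderiv_right le_rfl).clm_apply contDiff_const

lemma pd_pd_comm {g : (Fin n → ℝ) → ℝ} (hg : ContDiff ℝ 2 g) (j m : Fin n) :
    pd j (pd m g) x = pd m (pd j g) x := by
  have hdd : DifferentiableAt ℝ (fderiv ℝ g) x :=
    (hg.fderiv_right (m := 1) le_rfl).differentiable one_ne_zero x
  unfold pd
  simp only [fderiv_clm_apply hdd (differentiableAt_const _), fderiv_const_apply,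
    ContinuousLinearMap.comp_zero, ContinuousLinearMap.flip_apply, zero_add]
  exact hg.contDiffAt.isSymmSndFDerivAt (by simp) _ _

end PartialDerivatives

section VectorCalculus

variable {n : ℕ} {x : Fin n → ℝ}

theorem grad_comp {f : (Fin n → ℝ) → ℝ} {F : (Fin n → ℝ) → Fin n → ℝ}
    (hf : DifferentiableAt ℝ f (F x)) (hF : DifferentiableAt ℝ F x) :
    grad (fun y => f (F y)) x = grad f (F x) ᵥ* jacM F x := by
  ext j
  simp only [grad, Matrix.vecMul, dotProduct, jacM, Matrix.of_apply, pd_apply hF]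
  rw [pd, fderiv_fun_comp x hf hF, ContinuousLinearMap.comp_apply, fderiv_apply_eq_sum_pd]
  simp_rw [mul_comm]

theorem matDiv_smul {g : (Fin n → ℝ) → ℝ} {M : (Fin n → ℝ) → Matrix (Fin n) (Fin n) ℝ}
    (hg : DifferentiableAt ℝ g x)
    (hM : ∀ k l, DifferentiableAt ℝ (fun y => M y k l) x) :
    matDiv (fun y => g y • M y) x = g x • matDiv M x + grad g x ᵥ* M x := by
  ext i
  simp only [matDiv, Matrix.smul_apply, smul_eq_mul, pd_mul hg (hM _ i), sum_add_distrib,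
    mul_sum, Pi.add_apply, Pi.smul_apply, Matrix.vecMul, dotProduct, grad]
  rw [add_comm]

end VectorCalculus

namespace Matrix

theorem adjugate_apply_eq_sum_perm {R ι : Type*} [CommRing R] [Fintype ι] [DecidableEq ι]
    (M : Matrix ι ι R) (j i : ι) :
    M.adjugate j i = ∑ σ ∈ univ.filter (fun σ : Equiv.Perm ι => σ j = i),
      ((Equiv.Perm.sign σ : ℤ) : R) * ∏ k ∈ univ.erase j, M (σ k) k := by
  rw [adjugate_apply, det_apply', sum_filter]
  refine sum_congr rfl fun σ _ => ?_
  split_ifs with hσ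
  · rw [← mul_prod_erase univ _ (mem_univ j), hσ, updateRow_self, Pi.single_eq_same, one_mul]
    refine congrArg _ (prod_congr rfl fun k hk => congrFun (updateRow_ne ?_) k)
    rw [← hσ]
    exact σ.injective.ne (ne_of_mem_erase hk)
  · refine mul_eq_zero_of_right _ (prod_eq_zero (mem_univ (σ.symm i)) ?_)
    rw [Equiv.apply_symm_apply, updateRow_self]
    exact Pi.single_eq_of_ne (fun h => hσ (by rw [← h, Equiv.apply_symm_apply])) 1

end Matrix

section Piola

open Matrix

variable {n : ℕ} {M : (Fin n → ℝ) → Matrix (Fin n) (Fin n) ℝ} {x : Fin n → ℝ}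

lemma differentiableAt_adjugate_apply (hM : ∀ k l, DifferentiableAt ℝ (fun y => M y k l) x)
    (j i : Fin n) : DifferentiableAt ℝ (fun y => (M y).adjugate j i) x := by
  simp_rw [adjugate_apply_eq_sum_perm]
  exact .fun_sum fun σ _ => .const_mul
    (HasFDerivAt.finsetProd fun k _ => (hM (σ k) k).hasFDerivAt).differentiableAt _

lemma pd_adjugate_apply (hM : ∀ k l, DifferentiableAt ℝ (fun y => M y k l) x)
    (j i l : Fin n) :
    pd l (fun y => (M y).adjugate j i) x =
      ∑ σ ∈ univ.filter (fun σ : Equiv.Perm (Fin n) => σ j = i), ((Equiv.Perm.sign σ : ℤ) : ℝ) *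
        ∑ m ∈ univ.erase j,
          (∏ k ∈ (univ.erase j).erase m, M x (σ k) k) * pd l (fun y => M y (σ m) m) x := by
  simp_rw [adjugate_apply_eq_sum_perm]
  have hprod (σ : Equiv.Perm (Fin n)) :
      DifferentiableAt ℝ (fun y => ∏ k ∈ univ.erase j, M y (σ k) k) x :=
    (HasFDerivAt.finsetProd fun k _ => (hM (σ k) k).hasFDerivAt).differentiableAt
  rw [pd_sum fun σ _ => (hprod σ).const_mul _]
  refine sum_congr rfl fun σ _ => ?_
  rw [pd_const_mul (hprod σ), pd_prod fun k _ => hM (σ k) k]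

theorem matDiv_adjugate_eq_zero (hM : ∀ k l, DifferentiableAt ℝ (fun y => M y k l) x)
    (hcurl : ∀ k l m, pd l (fun y => M y k m) x = pd m (fun y => M y k l) x) :
    matDiv (fun y => (M y).adjugate) x = 0 := by
  ext i
  let T : Fin n × Equiv.Perm (Fin n) × Fin n → ℝ := fun ⟨j, σ, m⟩ =>
    ((Equiv.Perm.sign σ : ℤ) : ℝ) *
      ((∏ k ∈ (univ.erase j).erase m, M x (σ k) k) * pd j (fun y => M y (σ m) m) x)
  have hsum : matDiv (fun y => (M y).adjugate) x i =
      ∑ t ∈ univ.filter (fun t : Fin n × Equiv.Perm (Fin n) × Fin n => t.2.1 t.1 = i ∧ t.2.2 ≠ t.1),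
        T t := by
    rw [sum_finset_product _ univ (fun j => univ.filter (fun σ => σ j = i) ×ˢ univ.erase j)
      (by simp)]
    simp only [matDiv, pd_adjugate_apply hM, sum_product, mul_sum, T]
  rw [hsum, Pi.zero_apply]
  refine sum_involution (fun t _ => (t.2.2, t.2.1 * Equiv.swap t.1 t.2.2, t.1)) ?_ ?_ ?_ ?_
  · rintro ⟨j, σ, m⟩ ht
    have hjm : j ≠ m := (mem_filter.1 ht).2.2.symm
    have hprod : ∏ k ∈ (univ.erase m).erase j, M x ((σ * Equiv.swap j m) k) k =
        ∏ k ∈ (univ.erase j).erase m, M x (σ k) k := by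
      rw [erase_right_comm]
      refine prod_congr rfl fun k hk => ?_
      rw [Equiv.Perm.mul_apply, Equiv.swap_apply_of_ne_of_ne (ne_of_mem_erase (mem_of_mem_erase hk))
        (ne_of_mem_erase hk)]
    have hcol : (σ * Equiv.swap j m) j = σ m := by
      rw [Equiv.Perm.mul_apply, Equiv.swap_apply_left]
    simp only [T, hprod, hcol, hcurl (σ m) m j, Equiv.Perm.sign_mul, Equiv.Perm.sign_swap hjm]
    push_cast
    ring
  · rintro ⟨j, σ, m⟩ ht _ h
    exact (mem_filter.1 ht).2.2 (congrArg Prod.fst h)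
  · rintro ⟨j, σ, m⟩ ht
    obtain ⟨hσ, hmj⟩ := (mem_filter.1 ht).2
    simp [hσ, hmj.symm]
  · rintro ⟨j, σ, m⟩ _
    simp [Equiv.swap_comm m j, mul_assoc]

end Piola

section Jacobian

variable {n : ℕ} {F : (Fin n → ℝ) → Fin n → ℝ}

lemma differentiableAt_jacM_apply (hF : ContDiff ℝ 2 F) (x : Fin n → ℝ) (k l : Fin n) :
    DifferentiableAt ℝ (fun y => jacM F y k l) x :=
  (((contDiff_pi.1 hF k).pd (m := 1) l).differentiable one_ne_zero) x

lemma pd_jacM_apply_comm (hF : ContDiff ℝ 2 F) (x : Fin n → ℝ) (k l m : Fin n) :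
    pd l (fun y => jacM F y k m) x = pd m (fun y => jacM F y k l) x :=
  pd_pd_comm (contDiff_pi.1 hF k) l m

theorem matDiv_adjugate_jacM_eq_zero (hF : ContDiff ℝ 2 F) (x : Fin n → ℝ) :
    matDiv (fun y => (jacM F y).adjugate) x = 0 :=
  matDiv_adjugate_eq_zero (differentiableAt_jacM_apply hF x) (pd_jacM_apply_comm hF x)

end Jacobian

theorem grad_lagrangian_change_of_variables_general {n : ℕ}
    (e : (Fin n → ℝ) ≃ (Fin n → ℝ))
    (hX : ContDiff ℝ 2 ⇑e)
    (hJ : ∀ x, 0 < (jacM (⇑e) x).det)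
    (f : (Fin n → ℝ) → ℝ) (hf : ContDiff ℝ 1 f)
    (x : Fin n → ℝ) (i : Fin n) :
    pd i f (e x)
      = ((jacM (⇑e) x).det)⁻¹ *
          ∑ j, pd j (fun y => (jacM (⇑e) y).adjugate j i * f (e y)) x := by
  have hdX : DifferentiableAt ℝ e x := hX.differentiable two_ne_zero x
  have hdf : DifferentiableAt ℝ f (e x) := hf.differentiable one_ne_zero _
  have hdfX : DifferentiableAt ℝ (fun y => f (e y)) x := hdf.comp x hdX
  have hdiv : matDiv (fun y => f (e y) • (jacM e y).adjugate) x
      = (jacM e x).det • grad f (e x) := by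
    rw [matDiv_smul hdfX
        (differentiableAt_adjugate_apply (differentiableAt_jacM_apply hX x)),
      matDiv_adjugate_jacM_eq_zero hX, smul_zero, zero_add, grad_comp hdf hdX,
      Matrix.vecMul_vecMul, Matrix.mul_adjugate, Matrix.vecMul_smul, Matrix.vecMul_one]
  have hdiv_i := congrFun hdiv i
  simp only [matDiv, Matrix.smul_apply, smul_eq_mul, Pi.smul_apply, grad] at hdiv_i
  simp_rw [mul_comm _ (f (e _)), hdiv_i, inv_mul_cancel_left₀ (hJ x).ne']

/-- for a C² diffeomorphism `X` with positive Jacobian determinant `J`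
and `f̄ = f ∘ X`, one has `(∇f) ∘ X = J⁻¹ div(adj(DX) f̄)`, i.e.
`(∂ᵢf)(X x) = J(x)⁻¹ ∑ⱼ ∂ⱼ[(adj DX)ⱼᵢ f̄](x)`. -/
theorem grad_lagrangian_change_of_variables {n : ℕ} (hn : 2 ≤ n)
    (e : (Fin n → ℝ) ≃ (Fin n → ℝ))
    (hX : ContDiff ℝ 2 ⇑e) (hXinv : ContDiff ℝ 2 ⇑e.symm)
    (hJ : ∀ x, 0 < (jacM (⇑e) x).det)
    (f : (Fin n → ℝ) → ℝ) (hf : ContDiff ℝ 1 f)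
    (x : Fin n → ℝ) (i : Fin n) :
    pd i f (e x)
      = ((jacM (⇑e) x).det)⁻¹ *
          ∑ j, pd j (fun y => (jacM (⇑e) y).adjugate j i * f (e y)) x :=
  grad_lagrangian_change_of_variables_general e hX hJ f hf x i
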